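/- arXiv:2512.07315 — 5 statements merged into one kernel-verified Lean document; each statement's English description precedes it below -/
import Mathlib

section
/- Let T be the Sommerville tetrahedron with vertices A=(-1,0,0), B=(1,0,0), C=(0,-1,1), D=(0,1,1), and let M=(0,0,0) be the midpoint of its longest edge AB. Then the two sub-tetrahedra A M C D and M B C D produced by longest-edge bisection are isometric: there is a Euclidean isometry of ℝ³ mapping the vertex set {A,M,C,D} onto {M,B,C,D}. -/
/-! The reflection in the plane `x₀ = 0` fixes `M`, `C`, `D`, which lie in that plane, and
swaps `A` and `B`. -/

theorem Matrix.diagonal_mem_orthogonalGroup {n R : Type*} [Fintype n] [DecidableEq n]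
    [CommRing R] {d : n → R} (hd : ∀ i, d i * d i = 1) :
    Matrix.diagonal d ∈ Matrix.orthogonalGroup n R := by
  rw [Matrix.mem_orthogonalGroup_iff, Matrix.diagonal_transpose, Matrix.diagonal_mul_diagonal]
  exact Matrix.diagonal_eq_one.mpr (funext hd)

/-- Longest-edge bisection of the Sommerville tetrahedron `A B C D` at the midpoint `M`
of its longest edge `AB` produces two isometric sub-tetrahedra `A M C D` and `M B C D`:
some Euclidean isometry of `ℝ³` (an orthogonal matrix composed with a translation)
maps the vertex set `{A, M, C, D}` onto `{M, B, C, D}`. -/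
theorem sommerville_children_isometric :
    let A : Fin 3 → ℝ := ![-1, 0, 0]
    let B : Fin 3 → ℝ := ![1, 0, 0]
    let C : Fin 3 → ℝ := ![0, -1, 1]
    let D : Fin 3 → ℝ := ![0, 1, 1]
    let M : Fin 3 → ℝ := ![0, 0, 0]
    ∃ (R : Matrix (Fin 3) (Fin 3) ℝ) (b : Fin 3 → ℝ),
      R ∈ Matrix.orthogonalGroup (Fin 3) ℝ ∧
      (fun x => b + R.mulVec x) '' ({A, M, C, D} : Set (Fin 3 → ℝ)) = {M, B, C, D} := by
  intro A B C D M
  have reflect (x : Fin 3 → ℝ) : (Matrix.diagonal ![-1, 1, 1]).mulVec x = ![-x 0, x 1, x 2] := by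
    ext i; fin_cases i <;> simp [Matrix.mulVec_diagonal]
  refine ⟨Matrix.diagonal ![-1, 1, 1], 0,
    Matrix.diagonal_mem_orthogonalGroup fun i => by fin_cases i <;> norm_num, ?_⟩
  simp only [zero_add, reflect, Set.image_insert_eq, Set.image_singleton]
  simp [A, B, C, D, M, Set.insert_comm]
end

section
/- Let τ^S be the tetrahedron with vertices A=(0,0,0), B=(1,0,0), C=(1/2, √2/2, 0), D=(1/2, 0, √2/2), whose longest edge is AB, and let M=(1/2,0,0). Then each of the two sub-tetrahedra A M C D and M B C D is similar (via a map x ↦ b + λRx with λ>0, R ∈ O(3)) to the tetrahedron τ^H with vertices (0,0,0), (1,0,0), (1/2, 1/2, 0), (1/2, 1/2, 1/2). -/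
/-!
Both children are congruent to τ^H. The left child `A M C D` is carried onto τ^H by a rotation
followed by a translation sending `C, D, M, A` to `(0,0,0), (1,0,0), (1/2,1/2,0), (1/2,1/2,1/2)`:
the edges `CD` and `AM`, of lengths `1` and `1/2`, go to the edges of τ^H with those lengths.
The right child `M B C D` is the mirror image of the left one in the plane `x = 1/2`, which swaps
`A` and `B` and fixes `M`, `C`, `D`; similarity is transitive. The longest-edge claim is a direct
computation: the squared edge lengths of τ^S are `1`, `3/4` and `1`.
-/

/-- Euclidean distance between two points of `ℝ³` (represented as `Fin 3 → ℝ`). -/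
noncomputable def dist3 (x y : Fin 3 → ℝ) : ℝ :=
  Real.sqrt ((x 0 - y 0) ^ 2 + (x 1 - y 1) ^ 2 + (x 2 - y 2) ^ 2)

/-- Two subsets of `ℝ³` are similar if a similarity transformation `x ↦ b + λ R x`
with `λ > 0` and `R ∈ O(3)` maps one onto the other. -/
def SimilarSet (S T : Set (Fin 3 → ℝ)) : Prop :=
  ∃ (lam : ℝ) (R : Matrix (Fin 3) (Fin 3) ℝ) (b : Fin 3 → ℝ),
    0 < lam ∧ R ∈ Matrix.orthogonalGroup (Fin 3) ℝ ∧
    (fun x => b + lam • R.mulVec x) '' S = T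

open Matrix

theorem SimilarSet.trans {S T U : Set (Fin 3 → ℝ)} (hST : SimilarSet S T) (hTU : SimilarSet T U) :
    SimilarSet S U := by
  obtain ⟨lam₁, R₁, b₁, hlam₁, hR₁, rfl⟩ := hST
  obtain ⟨lam₂, R₂, b₂, hlam₂, hR₂, rfl⟩ := hTU
  refine ⟨lam₂ * lam₁, R₂ * R₁, b₂ + lam₂ • R₂ *ᵥ b₁, mul_pos hlam₂ hlam₁,
    Submonoid.mul_mem _ hR₂ hR₁, ?_⟩
  rw [Set.image_image]
  congr 1
  funext x
  rw [mulVec_add, mulVec_smul, ← mulVec_mulVec, smul_add, smul_smul, add_assoc]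

theorem similarSet_of_map_four {lam : ℝ} {R : Matrix (Fin 3) (Fin 3) ℝ} {b : Fin 3 → ℝ}
    (hlam : 0 < lam) (hR : R ∈ orthogonalGroup (Fin 3) ℝ) {p₁ p₂ p₃ p₄ q₁ q₂ q₃ q₄ : Fin 3 → ℝ}
    (h₁ : b + lam • R *ᵥ p₁ = q₁) (h₂ : b + lam • R *ᵥ p₂ = q₂)
    (h₃ : b + lam • R *ᵥ p₃ = q₃) (h₄ : b + lam • R *ᵥ p₄ = q₄) :
    SimilarSet {p₁, p₂, p₃, p₄} {q₁, q₂, q₃, q₄} :=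
  ⟨lam, R, b, hlam, hR, by simp only [Set.image_insert_eq, Set.image_singleton, h₁, h₂, h₃, h₄]⟩

theorem dist3_vec3 (a b c a' b' c' : ℝ) :
    dist3 ![a, b, c] ![a', b', c'] = √((a - a') ^ 2 + (b - b') ^ 2 + (c - c') ^ 2) :=
  rfl

theorem dist3_le_of_mem_tauS :
    ∀ x ∈ ({![0, 0, 0], ![1, 0, 0], ![1/2, √2 / 2, 0], ![1/2, 0, √2 / 2]} : Set (Fin 3 → ℝ)),
    ∀ y ∈ ({![0, 0, 0], ![1, 0, 0], ![1/2, √2 / 2, 0], ![1/2, 0, √2 / 2]} : Set (Fin 3 → ℝ)),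
      dist3 x y ≤ dist3 ![0, 0, 0] ![1, 0, 0] := by
  have hAB : dist3 ![0, 0, 0] ![1, 0, 0] = 1 := by norm_num [dist3_vec3]
  rintro x hx y hy
  rw [hAB]
  simp only [Set.mem_insert_iff, Set.mem_singleton_iff] at hx hy
  rcases hx with rfl | rfl | rfl | rfl <;> rcases hy with rfl | rfl | rfl | rfl <;>
    rw [dist3_vec3, Real.sqrt_le_one] <;> norm_num [div_pow]

noncomputable def tauSChildRotation : Matrix (Fin 3) (Fin 3) ℝ :=
  !![0, -(√2 / 2), √2 / 2; 0, -(√2 / 2), -(√2 / 2); -1, 0, 0]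

theorem tauSChildRotation_mem_orthogonalGroup :
    tauSChildRotation ∈ orthogonalGroup (Fin 3) ℝ := by
  rw [mem_orthogonalGroup_iff]
  ext i j
  fin_cases i <;> fin_cases j <;>
    norm_num [tauSChildRotation, mul_apply, Fin.sum_univ_three, one_apply, div_mul_div_comm,
      cons_val_two, tail_cons, head_cons]

theorem tauSChildRotation_mulVec (x y z : ℝ) :
    tauSChildRotation *ᵥ ![x, y, z] = ![√2 / 2 * (z - y), -(√2 / 2 * (y + z)), -x] := by
  simp only [tauSChildRotation, cons_mulVec, vec3_dotProduct', empty_mulVec, vecCons_inj,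
    and_true]
  exact ⟨by ring, by ring, by ring⟩

theorem similarSet_tauS_leftChild_tauH :
    SimilarSet {![0, 0, 0], ![1/2, 0, 0], ![1/2, √2 / 2, 0], ![1/2, 0, √2 / 2]}
      {![0, 0, 0], ![1, 0, 0], ![1/2, 1/2, 0], ![1/2, 1/2, 1/2]} := by
  have hperm : ({![0, 0, 0], ![1/2, 0, 0], ![1/2, √2 / 2, 0], ![1/2, 0, √2 / 2]} :
      Set (Fin 3 → ℝ)) = {![1/2, √2 / 2, 0], ![1/2, 0, √2 / 2], ![1/2, 0, 0], ![0, 0, 0]} := by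
    ext; simp only [Set.mem_insert_iff, Set.mem_singleton_iff]; tauto
  rw [hperm]
  apply similarSet_of_map_four one_pos tauSChildRotation_mem_orthogonalGroup
    (b := ![1/2, 1/2, 1/2]) <;> rw [tauSChildRotation_mulVec] <;> ext i <;> fin_cases i <;>
    norm_num [div_mul_div_comm]

theorem similarSet_tauS_rightChild_leftChild :
    SimilarSet {![1/2, 0, 0], ![1, 0, 0], ![1/2, √2 / 2, 0], ![1/2, 0, √2 / 2]}
      {![0, 0, 0], ![1/2, 0, 0], ![1/2, √2 / 2, 0], ![1/2, 0, √2 / 2]} := by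
  rw [Set.insert_comm (![0, 0, 0] : Fin 3 → ℝ)]
  apply similarSet_of_map_four one_pos (R := diagonal ![-1, 1, 1]) (b := ![1, 0, 0])
  · rw [mem_orthogonalGroup_iff, diagonal_transpose, diagonal_mul_diagonal, ← diagonal_one]
    congr 1
    ext i
    fin_cases i <;> norm_num
  all_goals ext i; fin_cases i <;> norm_num [mulVec_diagonal]

/-- LEB of τ^S at the midpoint of its longest edge AB gives two children each similar to τ^H. -/
theorem tauS_children_similar_tauH :
    let A : Fin 3 → ℝ := ![0, 0, 0]
    let B : Fin 3 → ℝ := ![1, 0, 0]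
    let C : Fin 3 → ℝ := ![1/2, Real.sqrt 2 / 2, 0]
    let D : Fin 3 → ℝ := ![1/2, 0, Real.sqrt 2 / 2]
    let M : Fin 3 → ℝ := ![1/2, 0, 0]
    (∀ x ∈ ({A, B, C, D} : Set (Fin 3 → ℝ)), ∀ y ∈ ({A, B, C, D} : Set (Fin 3 → ℝ)),
      dist3 x y ≤ dist3 A B) ∧
    SimilarSet ({A, M, C, D} : Set (Fin 3 → ℝ)) ({![0, 0, 0], ![1, 0, 0], ![1/2, 1/2, 0], ![1/2, 1/2, 1/2]} : Set (Fin 3 → ℝ)) ∧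
    SimilarSet ({M, B, C, D} : Set (Fin 3 → ℝ)) ({![0, 0, 0], ![1, 0, 0], ![1/2, 1/2, 0], ![1/2, 1/2, 1/2]} : Set (Fin 3 → ℝ)) :=
  ⟨dist3_le_of_mem_tauS, similarSet_tauS_leftChild_tauH,
    similarSet_tauS_rightChild_leftChild.trans similarSet_tauS_leftChild_tauH⟩
end

section
/- The four tetrahedra τ^S, τ^H, τ^P, τ^Q, given by vertex sets {(0,0,0),(1,0,0),(1/2,√2/2,0),(1/2,0,√2/2)}, {(0,0,0),(1,0,0),(1/2,1/2,0),(1/2,1/2,1/2)}, {(0,0,0),(1,0,0),(1/3,√2/3,0),(2/3,√2/6,√6/6)}, and {(0,0,0),(1,0,0),(1/2,√2/4,0),(1/2,0,1/2)} respectively, are pairwise non-similar: no similarity transformation x ↦ b + λRx (λ>0, R ∈ O(3)) maps the vertex set of one onto the vertex set of another. -/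
open Matrix Finset

section
variable {n : Type*} [Fintype n]

noncomputable def sqDist (x y : n → ℝ) : ℝ := (x - y) ⬝ᵥ (x - y)

theorem sqDist_comm (x y : n → ℝ) : sqDist x y = sqDist y x := by
  rw [sqDist, sqDist, ← neg_sub, neg_dotProduct, dotProduct_neg, neg_neg]

@[simp] theorem sqDist_self (x : n → ℝ) : sqDist x x = 0 := by simp [sqDist]

theorem sqDist_eq_zero {x y : n → ℝ} : sqDist x y = 0 ↔ x = y := by
  rw [sqDist, dotProduct_self_eq_zero, sub_eq_zero]

theorem sqDist_similarity [DecidableEq n] {R : Matrix n n ℝ} (hR : R ∈ orthogonalGroup n ℝ)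
    (lam : ℝ) (b x y : n → ℝ) :
    sqDist (b + lam • R *ᵥ x) (b + lam • R *ᵥ y) = lam ^ 2 * sqDist x y := by
  have hRR : Rᵀ * R = 1 := (mem_orthogonalGroup_iff' n ℝ).mp hR
  rw [sqDist, add_sub_add_left_eq_sub, ← smul_sub, ← mulVec_sub, smul_dotProduct, dotProduct_smul,
    dotProduct_mulVec, ← mulVec_transpose, mulVec_mulVec, hRR, one_mulVec, smul_smul, sqDist,
    smul_eq_mul, sq]

theorem similarity_injective [DecidableEq n] {R : Matrix n n ℝ} (hR : R ∈ orthogonalGroup n ℝ)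
    {lam : ℝ} (hlam : lam ≠ 0) (b : n → ℝ) : Function.Injective fun x => b + lam • R *ᵥ x := by
  intro x y hxy
  have h := sqDist_similarity hR lam b x y
  rw [show b + lam • R *ᵥ x = b + lam • R *ᵥ y from hxy, sqDist_self] at h
  exact sqDist_eq_zero.mp ((mul_eq_zero.mp h.symm).resolve_left (pow_ne_zero 2 hlam))

noncomputable def pairMoment (k : ℕ) (F : Finset (n → ℝ)) : ℝ :=
  ∑ x ∈ F, ∑ y ∈ F, sqDist x y ^ k

theorem pairMoment_image_similarity [DecidableEq n] {R : Matrix n n ℝ}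
    (hR : R ∈ orthogonalGroup n ℝ) {lam : ℝ} (hlam : lam ≠ 0) (b : n → ℝ) (k : ℕ)
    (F : Finset (n → ℝ)) :
    pairMoment k (F.image fun x => b + lam • R *ᵥ x) = lam ^ (2 * k) * pairMoment k F := by
  have hinj := similarity_injective hR hlam b
  simp only [pairMoment, sum_image hinj.injOn, sqDist_similarity hR, mul_sum, mul_pow, pow_mul]

theorem pairMoment_tetrahedron {a b c d : n → ℝ} (hab : a ≠ b) (hac : a ≠ c) (had : a ≠ d)
    (hbc : b ≠ c) (hbd : b ≠ d) (hcd : c ≠ d) {k : ℕ} (hk : k ≠ 0) :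
    pairMoment k {a, b, c, d} = 2 * (sqDist a b ^ k + sqDist a c ^ k + sqDist a d ^ k +
      sqDist b c ^ k + sqDist b d ^ k + sqDist c d ^ k) := by
  simp only [pairMoment, mem_insert, mem_singleton, or_self, not_false_eq_true, sum_insert,
    sum_singleton, sqDist_self, ne_eq, zero_pow, zero_add, add_zero, hab, hac, had, hbc, hbd, hcd,
    hk, sqDist_comm b a, sqDist_comm c a, sqDist_comm c b, sqDist_comm d a, sqDist_comm d b,
    sqDist_comm d c]
  ring

noncomputable def shapeRatio (F : Finset (n → ℝ)) : ℝ :=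
  pairMoment 2 F / pairMoment 1 F ^ 2

theorem shapeRatio_image_similarity [DecidableEq n] {R : Matrix n n ℝ}
    (hR : R ∈ orthogonalGroup n ℝ) {lam : ℝ} (hlam : lam ≠ 0) (b : n → ℝ)
    (F : Finset (n → ℝ)) :
    shapeRatio (F.image fun x => b + lam • R *ᵥ x) = shapeRatio F := by
  rw [shapeRatio, shapeRatio, pairMoment_image_similarity hR hlam,
    pairMoment_image_similarity hR hlam, mul_pow, ← pow_mul,
    mul_div_mul_left _ _ (pow_ne_zero _ hlam)]

end

theorem shapeRatio_eq_of_similarSet {F G : Finset (Fin 3 → ℝ)} (h : SimilarSet ↑F ↑G) :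
    shapeRatio F = shapeRatio G := by
  obtain ⟨lam, R, b, hlam, hR, hFG⟩ := h
  have hG : F.image (fun x => b + lam • R *ᵥ x) = G := coe_injective (by rw [coe_image, hFG])
  rw [← hG, shapeRatio_image_similarity hR hlam.ne']

theorem sqDist_vec3 (x₀ x₁ x₂ y₀ y₁ y₂ : ℝ) :
    sqDist ![x₀, x₁, x₂] ![y₀, y₁, y₂] = (x₀ - y₀) ^ 2 + (x₁ - y₁) ^ 2 + (x₂ - y₂) ^ 2 := by
  simp [sqDist, dotProduct, Fin.sum_univ_three, sq]

noncomputable def tetS : Finset (Fin 3 → ℝ) :=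
  {![0, 0, 0], ![1, 0, 0], ![1/2, √2 / 2, 0], ![1/2, 0, √2 / 2]}

noncomputable def tetH : Finset (Fin 3 → ℝ) :=
  {![0, 0, 0], ![1, 0, 0], ![1/2, 1/2, 0], ![1/2, 1/2, 1/2]}

noncomputable def tetP : Finset (Fin 3 → ℝ) :=
  {![0, 0, 0], ![1, 0, 0], ![1/3, √2 / 3, 0], ![2/3, √2 / 6, √6 / 6]}

noncomputable def tetQ : Finset (Fin 3 → ℝ) :=
  {![0, 0, 0], ![1, 0, 0], ![1/2, √2 / 4, 0], ![1/2, 0, 1/2]}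

theorem shapeRatio_tetS : shapeRatio tetS = 17 / 200 := by
  rw [tetS, shapeRatio, pairMoment_tetrahedron, pairMoment_tetrahedron] <;>
    norm_num [sqDist_vec3, div_pow]

theorem shapeRatio_tetH : shapeRatio tetH = 43 / 450 := by
  rw [tetH, shapeRatio, pairMoment_tetrahedron, pairMoment_tetrahedron] <;>
    norm_num [sqDist_vec3]

theorem shapeRatio_tetP : shapeRatio tetP = 1 / 10 := by
  rw [tetP, shapeRatio, pairMoment_tetrahedron, pairMoment_tetrahedron] <;>
    norm_num [sqDist_vec3, div_pow, sub_sq, mul_assoc, div_mul_div_comm]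

theorem shapeRatio_tetQ : shapeRatio tetQ = 123 / 1250 := by
  rw [tetQ, shapeRatio, pairMoment_tetrahedron, pairMoment_tetrahedron] <;>
    norm_num [sqDist_vec3, div_pow]

/-- The four tetrahedra τ^S, τ^H, τ^P, τ^Q in the LEB orbit of the Sommerville tetrahedron
are pairwise non-similar. -/
theorem orbit_pairwise_not_similar :
    let tS : Set (Fin 3 → ℝ) :=
      {![0, 0, 0], ![1, 0, 0], ![1/2, Real.sqrt 2 / 2, 0], ![1/2, 0, Real.sqrt 2 / 2]}
    let tH : Set (Fin 3 → ℝ) :=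
      {![0, 0, 0], ![1, 0, 0], ![1/2, 1/2, 0], ![1/2, 1/2, 1/2]}
    let tP : Set (Fin 3 → ℝ) :=
      {![0, 0, 0], ![1, 0, 0], ![1/3, Real.sqrt 2 / 3, 0],
        ![2/3, Real.sqrt 2 / 6, Real.sqrt 6 / 6]}
    let tQ : Set (Fin 3 → ℝ) :=
      {![0, 0, 0], ![1, 0, 0], ![1/2, Real.sqrt 2 / 4, 0], ![1/2, 0, 1/2]}
    ¬ SimilarSet tS tH ∧ ¬ SimilarSet tS tP ∧ ¬ SimilarSet tS tQ ∧
    ¬ SimilarSet tH tP ∧ ¬ SimilarSet tH tQ ∧ ¬ SimilarSet tP tQ := by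
  intro tS tH tP tQ
  have hS : tS = tetS := by simp [tS, tetS]
  have hH : tH = tetH := by simp [tH, tetH]
  have hP : tP = tetP := by simp [tP, tetP]
  have hQ : tQ = tetQ := by simp [tQ, tetQ]
  simp only [hS, hH, hP, hQ]
  refine ⟨?_, ?_, ?_, ?_, ?_, ?_⟩ <;> refine mt shapeRatio_eq_of_similarSet ?_ <;>
    norm_num [shapeRatio_tetS, shapeRatio_tetH, shapeRatio_tetP, shapeRatio_tetQ]
end

section
/- For any z ∈ ℂ with Im(z) > 0, any w ∈ ℂ and t > 0 satisfying |w|² + t² ≤ 1, |w−1|² + t² ≤ 1 and |w−z|² + t² ≤ 1, the volume of the tetrahedron with vertices (0,0,0), (1,0,0), (Re z, Im z, 0), (Re w, Im w, t) is at most √2/12, with equality if and only if the tetrahedron is regular with all edges of length 1 (i.e., z = 1/2 + (√3/2)i, w = 1/2 + (√3/6)i, t = √6/3, assuming also |z| ≤ 1 and |z−1| ≤ 1). -/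
/-!
The determinant is `Im z * t`, twice the area of the triangle cut out by the plane `x = 1/2`
orthogonal to the edge `[0, 1]`: its vertices are the foot `(1/2, 0, 0)` and the projections
`(Im z, 0)` and `(Im w, t)` of the two other vertices. Averaging the distances to `0` and `1`
puts both projections within `√3/2` of the foot, and they are at most `1` apart, so the triangle
has two sides at most `√3/2` and one at most `1`; its area is then at most that of the isosceles
triangle with these sides, `√2/4`, which is attained only by the regular tetrahedron.
-/

lemma sq_re_sub_half_add_le {w : ℂ} {s : ℝ} (h₀ : ‖w‖ ^ 2 + s ≤ 1) (h₁ : ‖w - 1‖ ^ 2 + s ≤ 1) :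
    (w.re - 1 / 2) ^ 2 + (w.im ^ 2 + s) ≤ 3 / 4 := by
  simp only [Complex.sq_norm, Complex.normSq_apply, Complex.sub_re, Complex.sub_im,
    Complex.one_re, Complex.one_im] at h₀ h₁
  linarith

lemma sq_mul_le_half_sub {b y t : ℝ} (hb : b ^ 2 ≤ 3 / 4) (hyt : y ^ 2 + t ^ 2 ≤ 3 / 4)
    (hbyt : (y - b) ^ 2 + t ^ 2 ≤ 1) :
    (b * t) ^ 2 ≤ 1 / 2 - ((3 / 4 - b ^ 2) + (3 / 4 - (y ^ 2 + t ^ 2))) / 4 := by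
  -- The slack terms record how far the two short sides are from `√3/2`; they pin the equality case.
  set p := b ^ 2
  set q := y ^ 2 + t ^ 2
  have hbt : (b * t) ^ 2 = p * q - (b * y) ^ 2 := by ring
  have hby : p + q - 1 ≤ 2 * (b * y) := by linarith
  rcases le_or_gt 1 (p + q) with hpq | hpq
  · nlinarith [sq_nonneg (p - q)]
  · nlinarith [sq_nonneg (p - q), sq_nonneg (b * y), sq_nonneg b, sq_nonneg t]

lemma eq_regular_of_sq_mul_eq_half {b y t : ℝ} (hb : 0 < b) (ht : 0 < t) (hb₂ : b ^ 2 = 3 / 4)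
    (hyt : y ^ 2 + t ^ 2 = 3 / 4) (hbyt : (y - b) ^ 2 + t ^ 2 ≤ 1) (h : (b * t) ^ 2 = 1 / 2) :
    b = √3 / 2 ∧ y = √3 / 6 ∧ t = √6 / 3 := by
  have ht₂ : t ^ 2 = 2 / 3 := by nlinarith
  have hy : 0 < y := by nlinarith
  have hy₂ : y ^ 2 = 1 / 12 := by linarith
  refine ⟨?_, ?_, ?_⟩ <;>
    rw [← sq_eq_sq₀ (by positivity) (by positivity), div_pow, Real.sq_sqrt (by norm_num)] <;>
    linarith

/-- Among canonical tetrahedra with vertices `(0,0,0)`, `(1,0,0)`, `(Re z, Im z, 0)`,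
`(Re w, Im w, t)` all of whose edges have length at most `1`, the volume
`|det| / 6` is at most `√2/12`, with equality exactly for the regular tetrahedron with
unit edge, i.e. `z = 1/2 + (√3/2) i`, `w = 1/2 + (√3/6) i`, `t = √6/3`. -/
theorem canonical_tetrahedron_volume_le (z w : ℂ) (t : ℝ) (hz : 0 < z.im) (ht : 0 < t)
    (hza : ‖z‖ ≤ 1) (hzb : ‖z - 1‖ ≤ 1)
    (h1 : ‖w‖ ^ 2 + t ^ 2 ≤ 1)
    (h2 : ‖w - 1‖ ^ 2 + t ^ 2 ≤ 1)
    (h3 : ‖w - z‖ ^ 2 + t ^ 2 ≤ 1) :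
    |Matrix.det !![(1 : ℝ), 0, 0; z.re, z.im, 0; w.re, w.im, t]| / 6 ≤ Real.sqrt 2 / 12 ∧
    (|Matrix.det !![(1 : ℝ), 0, 0; z.re, z.im, 0; w.re, w.im, t]| / 6 = Real.sqrt 2 / 12 ↔
      z = 1/2 + (Real.sqrt 3 / 2) * Complex.I ∧
      w = 1/2 + (Real.sqrt 3 / 6) * Complex.I ∧
      t = Real.sqrt 6 / 3) := by
  have hw_mid := sq_re_sub_half_add_le h1 h2
  have hz_mid := sq_re_sub_half_add_le (w := z) (s := 0) (by nlinarith [norm_nonneg z])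
    (by nlinarith [norm_nonneg (z - 1)])
  have hwz : (w.im - z.im) ^ 2 + t ^ 2 ≤ 1 := by
    have him := Complex.im_sq_le_normSq (w - z)
    rw [Complex.sq_norm] at h3
    rw [Complex.sub_im] at him
    nlinarith
  have hb : z.im ^ 2 ≤ 3 / 4 := by nlinarith
  have hy : w.im ^ 2 + t ^ 2 ≤ 3 / 4 := by nlinarith
  have harea := sq_mul_le_half_sub hb hy hwz
  have hdet : Matrix.det !![(1 : ℝ), 0, 0; z.re, z.im, 0; w.re, w.im, t] = z.im * t := by
    simp [Matrix.det_fin_three]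
  have hbt : 0 < z.im * t := mul_pos hz ht
  have hsqrt2 : (√2 / 2) ^ 2 = 1 / 2 := by
    rw [div_pow, Real.sq_sqrt zero_le_two]; norm_num
  rw [hdet, abs_of_pos hbt, show √2 / 12 = √2 / 2 / 6 by ring,
    div_le_div_iff_of_pos_right (by norm_num), div_left_inj' (by norm_num),
    ← pow_le_pow_iff_left₀ hbt.le (by positivity) two_ne_zero,
    ← sq_eq_sq₀ hbt.le (by positivity), hsqrt2]
  refine ⟨by linarith, fun h => ?_, ?_⟩
  · obtain ⟨hb', hy', ht'⟩ := eq_regular_of_sq_mul_eq_half hz ht (by linarith) (by linarith) hwz h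
    have hzre : z.re = 1 / 2 := by nlinarith [sq_nonneg (z.re - 1 / 2)]
    have hwre : w.re = 1 / 2 := by nlinarith [sq_nonneg (w.re - 1 / 2)]
    refine ⟨?_, ?_, ht'⟩
    · rw [← Complex.re_add_im z, hzre, hb']; push_cast; ring
    · rw [← Complex.re_add_im w, hwre, hy']; push_cast; ring
  · rintro ⟨rfl, -, rfl⟩
    norm_num [mul_pow, div_pow]
end

section
/- Let T be the path tetrahedron with vertices A=(0,0,0), B=(1,0,0), C=(1,1,0), D=(1,1,1), with unique longest edge AD, and let M=(1/2,1/2,1/2) be its midpoint. Then the two children of longest-edge bisection, with vertex sets {A,B,C,M} and {M,B,C,D}, are isometric to each other, and each is similar to the tetrahedron τ^Q with vertices (0,0,0), (1,0,0), (1/2, √2/4, 0), (1/2, 0, 1/2). -/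
set_option maxHeartbeats 2000000 in
/-- Bisecting the path tetrahedron `A B C D` at the midpoint `M` of its unique longest
edge `AD` gives children `{A,B,C,M}` and `{M,B,C,D}` that are isometric to each other
(a Euclidean isometry `x ↦ b + R x`, `R ∈ O(3)`, maps one vertex set onto the other),
and each child is similar to the tetrahedron τ^Q. -/
theorem path_children_isometric_and_similar_tauQ :
    let A : Fin 3 → ℝ := ![0, 0, 0]
    let B : Fin 3 → ℝ := ![1, 0, 0]
    let C : Fin 3 → ℝ := ![1, 1, 0]
    let D : Fin 3 → ℝ := ![1, 1, 1]
    let M : Fin 3 → ℝ := ![1/2, 1/2, 1/2]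
    let tQ : Set (Fin 3 → ℝ) :=
      {![0, 0, 0], ![1, 0, 0], ![1/2, Real.sqrt 2 / 4, 0], ![1/2, 0, 1/2]}
    (∃ (R : Matrix (Fin 3) (Fin 3) ℝ) (b : Fin 3 → ℝ),
      R ∈ Matrix.orthogonalGroup (Fin 3) ℝ ∧
      (fun x => b + R.mulVec x) '' ({A, B, C, M} : Set (Fin 3 → ℝ)) = {M, B, C, D}) ∧
    SimilarSet ({A, B, C, M} : Set (Fin 3 → ℝ)) tQ ∧
    SimilarSet ({M, B, C, D} : Set (Fin 3 → ℝ)) tQ := by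
  intro A B C D M tQ
  have s2 : Real.sqrt 2 * Real.sqrt 2 = 2 := Real.mul_self_sqrt (by norm_num)
  have s2pos : 0 < Real.sqrt 2 := Real.sqrt_pos.mpr (by norm_num)
  refine ⟨?_, ?_, ?_⟩
  · -- isometry: A↦D, B↦C, C↦B, M↦M
    refine ⟨!![0,0,-1;0,-1,0;-1,0,0], ![1,1,1], ?_, ?_⟩
    · rw [Matrix.mem_orthogonalGroup_iff]
      ext i j
      fin_cases i <;> fin_cases j <;>
        simp [Matrix.mul_apply, Fin.sum_univ_three, Matrix.transpose]
    · have hA : ![(1:ℝ),1,1] + (!![0,0,-1;0,-1,0;-1,0,0] : Matrix (Fin 3) (Fin 3) ℝ).mulVec A = D := by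
        funext i
        fin_cases i <;> simp [A, D, Matrix.mulVec, dotProduct, Fin.sum_univ_three]
      have hB : ![(1:ℝ),1,1] + (!![0,0,-1;0,-1,0;-1,0,0] : Matrix (Fin 3) (Fin 3) ℝ).mulVec B = C := by
        funext i
        fin_cases i <;> simp [B, C, Matrix.mulVec, dotProduct, Fin.sum_univ_three]
      have hC : ![(1:ℝ),1,1] + (!![0,0,-1;0,-1,0;-1,0,0] : Matrix (Fin 3) (Fin 3) ℝ).mulVec C = B := by
        funext i
        fin_cases i <;> simp [B, C, Matrix.mulVec, dotProduct, Fin.sum_univ_three]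
      have hM : ![(1:ℝ),1,1] + (!![0,0,-1;0,-1,0;-1,0,0] : Matrix (Fin 3) (Fin 3) ℝ).mulVec M = M := by
        funext i
        fin_cases i <;> simp [M, Matrix.mulVec, dotProduct, Fin.sum_univ_three] <;> norm_num
      rw [Set.image_insert_eq, Set.image_insert_eq, Set.image_insert_eq,
        Set.image_singleton, hA, hB, hC, hM]
      ext x
      simp only [Set.mem_insert_iff, Set.mem_singleton_iff]
      tauto
  · -- child 1 similar to tQ: A↦P0, B↦P3, C↦P1, M↦P2, lam = √2/2
    refine ⟨Real.sqrt 2 / 2,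
      !![Real.sqrt 2/2, Real.sqrt 2/2, 0; 0, 0, 1; Real.sqrt 2/2, -(Real.sqrt 2)/2, 0],
      ![0,0,0], by positivity, ?_, ?_⟩
    · rw [Matrix.mem_orthogonalGroup_iff]
      ext i j
      fin_cases i <;> fin_cases j <;>
        simp [Matrix.mul_apply, Fin.sum_univ_three, Matrix.transpose] <;> nlinarith [s2]
    · have hA : ![(0:ℝ),0,0] + (Real.sqrt 2 / 2) • (!![Real.sqrt 2/2, Real.sqrt 2/2, 0; 0, 0, 1; Real.sqrt 2/2, -(Real.sqrt 2)/2, 0] : Matrix (Fin 3) (Fin 3) ℝ).mulVec A = ![0, 0, 0] := by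
        funext i
        fin_cases i <;> simp [A, Matrix.mulVec, dotProduct, Fin.sum_univ_three]
      have hB : ![(0:ℝ),0,0] + (Real.sqrt 2 / 2) • (!![Real.sqrt 2/2, Real.sqrt 2/2, 0; 0, 0, 1; Real.sqrt 2/2, -(Real.sqrt 2)/2, 0] : Matrix (Fin 3) (Fin 3) ℝ).mulVec B = ![1/2, 0, 1/2] := by
        funext i
        fin_cases i <;>
          simp [B, Matrix.mulVec, dotProduct, Fin.sum_univ_three] <;>
          nlinarith [s2]
      have hC : ![(0:ℝ),0,0] + (Real.sqrt 2 / 2) • (!![Real.sqrt 2/2, Real.sqrt 2/2, 0; 0, 0, 1; Real.sqrt 2/2, -(Real.sqrt 2)/2, 0] : Matrix (Fin 3) (Fin 3) ℝ).mulVec C = ![1, 0, 0] := by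
        funext i
        fin_cases i <;>
          simp [C, Matrix.mulVec, dotProduct, Fin.sum_univ_three] <;>
          nlinarith [s2]
      have hM : ![(0:ℝ),0,0] + (Real.sqrt 2 / 2) • (!![Real.sqrt 2/2, Real.sqrt 2/2, 0; 0, 0, 1; Real.sqrt 2/2, -(Real.sqrt 2)/2, 0] : Matrix (Fin 3) (Fin 3) ℝ).mulVec M = ![1/2, Real.sqrt 2 / 4, 0] := by
        funext i
        fin_cases i <;>
          simp [M, Matrix.mulVec, dotProduct, Fin.sum_univ_three] <;>
          nlinarith [s2]
      rw [Set.image_insert_eq, Set.image_insert_eq, Set.image_insert_eq,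
        Set.image_singleton, hA, hB, hC, hM]
      ext x
      simp only [tQ, Set.mem_insert_iff, Set.mem_singleton_iff]
      tauto
  · -- child 2 similar to tQ: D↦P0, B↦P1, C↦P3, M↦P2, lam = √2/2
    refine ⟨Real.sqrt 2 / 2,
      !![0, -(Real.sqrt 2)/2, -(Real.sqrt 2)/2; -1, 0, 0; 0, Real.sqrt 2/2, -(Real.sqrt 2)/2],
      ![1, Real.sqrt 2/2, 0], by positivity, ?_, ?_⟩
    · rw [Matrix.mem_orthogonalGroup_iff]
      ext i j
      fin_cases i <;> fin_cases j <;>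
        simp [Matrix.mul_apply, Fin.sum_univ_three, Matrix.transpose] <;> nlinarith [s2]
    · have hM : ![(1:ℝ), Real.sqrt 2/2, 0] + (Real.sqrt 2 / 2) • (!![0, -(Real.sqrt 2)/2, -(Real.sqrt 2)/2; -1, 0, 0; 0, Real.sqrt 2/2, -(Real.sqrt 2)/2] : Matrix (Fin 3) (Fin 3) ℝ).mulVec M = ![1/2, Real.sqrt 2 / 4, 0] := by
        funext i
        fin_cases i <;>
          simp [M, Matrix.mulVec, dotProduct, Fin.sum_univ_three] <;>
          nlinarith [s2]
      have hB : ![(1:ℝ), Real.sqrt 2/2, 0] + (Real.sqrt 2 / 2) • (!![0, -(Real.sqrt 2)/2, -(Real.sqrt 2)/2; -1, 0, 0; 0, Real.sqrt 2/2, -(Real.sqrt 2)/2] : Matrix (Fin 3) (Fin 3) ℝ).mulVec B = ![1, 0, 0] := by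
        funext i
        fin_cases i <;>
          simp [B, Matrix.mulVec, dotProduct, Fin.sum_univ_three] <;>
          nlinarith [s2]
      have hC : ![(1:ℝ), Real.sqrt 2/2, 0] + (Real.sqrt 2 / 2) • (!![0, -(Real.sqrt 2)/2, -(Real.sqrt 2)/2; -1, 0, 0; 0, Real.sqrt 2/2, -(Real.sqrt 2)/2] : Matrix (Fin 3) (Fin 3) ℝ).mulVec C = ![1/2, 0, 1/2] := by
        funext i
        fin_cases i <;>
          simp [C, Matrix.mulVec, dotProduct, Fin.sum_univ_three] <;>
          nlinarith [s2]
      have hD : ![(1:ℝ), Real.sqrt 2/2, 0] + (Real.sqrt 2 / 2) • (!![0, -(Real.sqrt 2)/2, -(Real.sqrt 2)/2; -1, 0, 0; 0, Real.sqrt 2/2, -(Real.sqrt 2)/2] : Matrix (Fin 3) (Fin 3) ℝ).mulVec D = ![0, 0, 0] := by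
        funext i
        fin_cases i <;>
          simp [D, Matrix.mulVec, dotProduct, Fin.sum_univ_three] <;>
          nlinarith [s2]
      rw [Set.image_insert_eq, Set.image_insert_eq, Set.image_insert_eq,
        Set.image_singleton, hM, hB, hC, hD]
      ext x
      simp only [tQ, Set.mem_insert_iff, Set.mem_singleton_iff]
      tauto
end
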